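/- arXiv:1305.6070 — 3 statements merged into one kernel-verified Lean document; each statement's English description precedes it below -/
import Mathlib

section
/- Let E be an ordered vector space with order unit e, and let x ∈ E. Then x < r·e for some real r with 0 < r < 1 if and only if e - x is an order unit of E. -/
/-- An order unit of an ordered real vector space. -/
def IsOrderUnit {E : Type*} [AddCommGroup E] [PartialOrder E] [Module ℝ E] (e : E) : Prop :=
  0 < e ∧ ∀ x : E, ∃ l : ℝ, 0 < l ∧ x ≤ l • e

/-- if `e` is an order unit then `x < r • e` for some `0 < r < 1`
iff `e - x` is an order unit. -/
theorem lt_smul_orderUnit_iff_sub_isOrderUnit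
    {E : Type*} [AddCommGroup E] [PartialOrder E] [IsOrderedAddMonoid E] [Module ℝ E]
    [PosSMulStrictMono ℝ E] [PosSMulReflectLT ℝ E]
    (e : E) (he : IsOrderUnit e) (x : E) :
    (∃ r : ℝ, 0 < r ∧ r < 1 ∧ x < r • e) ↔ IsOrderUnit (e - x) := by
  constructor
  · rintro ⟨r, hr0, hr1, hx⟩
    have h1r : (0:ℝ) < 1 - r := by linarith
    have hkey : (1 - r) • e ≤ e - x := by
      have := sub_le_sub_left hx.le e
      calc (1 - r) • e = e - r • e := by rw [sub_smul, one_smul]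
        _ ≤ e - x := this
    have hpos : 0 < (1 - r) • e := smul_pos h1r he.1
    refine ⟨lt_of_lt_of_le hpos hkey, fun y => ?_⟩
    obtain ⟨l, hl, hle⟩ := he.2 y
    refine ⟨l / (1 - r), div_pos hl h1r, ?_⟩
    have h2 : (l / (1 - r)) • ((1 - r) • e) ≤ (l / (1 - r)) • (e - x) :=
      smul_le_smul_of_nonneg_left hkey (le_of_lt (div_pos hl h1r))
    have h3 : (l / (1 - r)) • ((1 - r) • e) = l • e := by
      rw [smul_smul, div_mul_cancel₀]
      exact ne_of_gt h1r
    calc y ≤ l • e := hle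
      _ = (l / (1 - r)) • ((1 - r) • e) := h3.symm
      _ ≤ (l / (1 - r)) • (e - x) := h2
  · rintro ⟨hpos, hU⟩
    obtain ⟨l, hl, hx⟩ := hU x
    have h1l : (0:ℝ) < 1 + l := by linarith
    set r : ℝ := l / (1 + l) with hr
    have hr0 : 0 < r := div_pos hl h1l
    have hr1 : r < 1 := by rw [hr, div_lt_one h1l]; linarith
    have hxr : x ≤ r • e := by
      have h1 : (1 + l) • x ≤ l • e := by
        rw [smul_sub] at hx
        have := le_sub_iff_add_le.mp hx
        calc (1 + l) • x = x + l • x := by rw [add_smul, one_smul]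
          _ ≤ l • e := this
      have h2 := smul_le_smul_of_nonneg_left h1 (le_of_lt (inv_pos.mpr h1l))
      rw [smul_smul, inv_mul_cancel₀ (ne_of_gt h1l), one_smul, smul_smul] at h2
      rw [hr, div_eq_inv_mul]
      exact h2
    set s : ℝ := (r + 1) / 2 with hs
    refine ⟨s, by rw [hs]; linarith, by rw [hs]; linarith, ?_⟩
    have hd : (0:ℝ) < s - r := by rw [hs]; linarith
    have hle : (s - r) • e ≤ s • e - x := by
      calc (s - r) • e = s • e - r • e := by rw [sub_smul]
        _ ≤ s • e - x := sub_le_sub_left hxr _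
    have hp : 0 < s • e - x := lt_of_lt_of_le (smul_pos hd he.1) hle
    exact sub_pos.mp hp
end

section
/- Let E be an ordered Hausdorff topological vector space whose positive cone K has nonempty interior. Then K is Archimedean (i.e., from n·y ≤ x for all natural numbers n it follows that y ≤ 0) if and only if K is closed. -/
/-- let `E` be an ordered Hausdorff topological vector space whose positive
cone `K` has nonempty interior. Then `K` is Archimedean (from `n • y ≤ x` for all `n : ℕ`
with `x ∈ K` it follows that `y ≤ 0`) iff `K` is closed. -/
theorem archimedean_iff_cone_closed
    {E : Type*} [AddCommGroup E] [Module ℝ E] [TopologicalSpace E]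
    [IsTopologicalAddGroup E] [ContinuousSMul ℝ E] [T2Space E] [PartialOrder E]
    (K : Set E)
    (hK : ∀ x y : E, x ≤ y ↔ y - x ∈ K)
    (hKsmul : ∀ r : ℝ, 0 ≤ r → ∀ x ∈ K, r • x ∈ K)
    (hint : (interior K).Nonempty) :
    (∀ y x : E, x ∈ K → (∀ n : ℕ, (n : ℝ) • y ≤ x) → y ≤ 0) ↔ IsClosed K := by
  have hzero : (0 : E) ∈ K := by
    have := (hK 0 0).mp le_rfl; simpa using this
  have hadd : ∀ a ∈ K, ∀ b ∈ K, a + b ∈ K := by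
    intro a ha b hb
    have h1 : (0 : E) ≤ a := (hK 0 a).mpr (by simpa using ha)
    have h2 : a ≤ a + b := (hK a (a + b)).mpr (by simpa using hb)
    have := h1.trans h2
    simpa using (hK 0 (a + b)).mp this
  constructor
  · -- Archimedean → closed
    intro harch
    obtain ⟨e, he⟩ := hint
    have heK : e ∈ K := interior_subset he
    -- e + w ∈ K for every w ∈ closure K
    have hkey : ∀ w ∈ closure K, e + w ∈ K := by
      intro w hw
      set U : Set E := (fun x => e + x) ⁻¹' interior K with hU
      have hUopen : IsOpen U := isOpen_interior.preimage (by continuity)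
      have hU0 : (0 : E) ∈ U := by simpa [hU] using he
      set V : Set E := U ∩ (Neg.neg ⁻¹' U) with hV
      have hVopen : IsOpen V := hUopen.inter (hUopen.preimage continuous_neg)
      have hV0 : (0 : E) ∈ V := ⟨hU0, by simpa using hU0⟩
      set O : Set E := (fun k => k - w) ⁻¹' V with hO
      have hOopen : IsOpen O := hVopen.preimage (by continuity)
      have hOw : w ∈ O := by simpa [hO] using hV0
      obtain ⟨k, hkO, hkK⟩ := mem_closure_iff_nhds.mp hw O (hOopen.mem_nhds hOw)
      have h1 : w - k ∈ U := by
        have := hkO.2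
        simpa [hO, hV] using this
      have h2 : e + (w - k) ∈ K := interior_subset h1
      have := hadd _ h2 _ hkK
      have heq : e + (w - k) + k = e + w := by abel
      rwa [heq] at this
    rw [← closure_subset_iff_isClosed]
    intro z hz
    have hscale : ∀ n : ℕ, ((n : ℝ)) • z ∈ closure K := by
      intro n
      have hmaps : Set.MapsTo (fun x : E => (n : ℝ) • x) K K := fun x hx =>
        hKsmul _ (Nat.cast_nonneg n) x hx
      exact hmaps.closure (continuous_const_smul _) hz
    have hle : ∀ n : ℕ, (n : ℝ) • (-z) ≤ e := by
      intro n
      refine (hK _ _).mpr ?_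
      have := hkey _ (hscale n)
      simpa [smul_neg, sub_neg_eq_add] using this
    have := harch (-z) e heK hle
    have : z ∈ K := by simpa using (hK _ _).mp this
    exact this
  · -- closed → Archimedean
    intro hcl y x hx h
    have hmem : ∀ n : ℕ, (1 / ((n : ℝ) + 1)) • x - y ∈ K := by
      intro n
      have h1 : x - ((n : ℝ) + 1) • y ∈ K := by
        have := (hK _ _).mp (h (n + 1))
        simpa [Nat.cast_add] using this
      have h2 := hKsmul (1 / ((n : ℝ) + 1)) (by positivity) _ h1
      have hne : ((n : ℝ) + 1) ≠ 0 := by positivity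
      rw [smul_sub, smul_smul, one_div_mul_cancel hne, one_smul] at h2
      exact h2
    have htend : Filter.Tendsto (fun n : ℕ => (1 / ((n : ℝ) + 1)) • x - y)
        Filter.atTop (nhds (-y)) := by
      have h0 : Filter.Tendsto (fun n : ℕ => (1 / ((n : ℝ) + 1))) Filter.atTop
          (nhds (0 : ℝ)) := tendsto_one_div_add_atTop_nhds_zero_nat
      have h1 := h0.smul_const x
      rw [zero_smul] at h1
      have := h1.sub_const y
      simpa using this
    have : -y ∈ K := hcl.mem_of_tendsto htend (Filter.Eventually.of_forall hmem)
    exact (hK y 0).mpr (by simpa using this)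
end

section
/- Let (X, E, K, d) be a cone metric space and suppose f : X → X satisfies d(f(x), f(y)) ≤ c·d(x, y) for all x, y ∈ X, where 0 ≤ c < 1. Then f is a contraction with constant c with respect to the real-valued metric d̄(x, y) = p(d(x, y)), i.e., d̄(f(x), f(y)) ≤ c·d̄(x, y) for all x, y. -/
variable {E : Type*}

/-- `H_e`: the positive linear functionals normalized at `e`. -/
def He [AddCommGroup E] [PartialOrder E] [Module ℝ E] (e : E) : Set (E →ₗ[ℝ] ℝ) :=
  {f | (∀ x : E, 0 ≤ x → 0 ≤ f x) ∧ f e = 1}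

/-- The order-unit norm associated with `e`: `p(x) = sup {|g(x)| : g ∈ H_e}`. -/
noncomputable def pnorm [AddCommGroup E] [PartialOrder E] [Module ℝ E] (e : E) (x : E) : ℝ :=
  ⨆ f : He e, |(f : E →ₗ[ℝ] ℝ) x|

/-- if `f : X → X` is a contraction with constant `0 ≤ c < 1` for a cone
metric `d`, then it is a contraction with the same constant for the real-valued metric
`d̄(x,y) = p(d(x,y))`, `p` being the order-unit norm associated with `e ∈ int K`. -/
theorem coneMetric_contraction_dbar
    {X : Type*} [NormedAddCommGroup E] [NormedSpace ℝ E] [PartialOrder E]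
    (K : Set E) (hKcl : IsClosed K)
    (hK : ∀ x y : E, x ≤ y ↔ y - x ∈ K)
    (hKsmul : ∀ r : ℝ, 0 ≤ r → ∀ x ∈ K, r • x ∈ K)
    (hint : (interior K).Nonempty)
    (d : X → X → E)
    (hd0 : ∀ x y : X, d x y = 0 ↔ x = y)
    (hsymm : ∀ x y : X, d x y = d y x)
    (htri : ∀ x y z : X, d x y ≤ d x z + d y z)
    (e : E) (he : e ∈ interior K)
    (f : X → X) (c : ℝ) (hc0 : 0 ≤ c) (hc1 : c < 1)
    (hcontr : ∀ x y : X, d (f x) (f y) ≤ c • d x y) :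
    ∀ x y : X, pnorm e (d (f x) (f y)) ≤ c * pnorm e (d x y) := by
  intro x y
  -- membership in K is the same as being ≥ 0
  have hmemK : ∀ v : E, 0 ≤ v ↔ v ∈ K := by
    intro v
    rw [hK 0 v, sub_zero]
  -- d is nonnegative
  have hdnn : ∀ a b : X, (0 : E) ≤ d a b := by
    intro a b
    have h1 : d a a ≤ d a b + d a b := htri a a b
    rw [(hd0 a a).mpr rfl] at h1
    have h2 : d a b + d a b = (2 : ℝ) • d a b := by
      rw [two_smul]
    rw [h2] at h1
    have h3 : (2 : ℝ) • d a b ∈ K := (hmemK _).mp h1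
    have h4 : ((1 : ℝ)/2) • ((2 : ℝ) • d a b) ∈ K := hKsmul _ (by norm_num) _ h3
    rw [smul_smul] at h4
    norm_num at h4
    exact (hmemK _).mpr h4
  -- boundedness of the defining family of the norm
  have hbdd : ∀ v : E, BddAbove (Set.range fun g : He e => |(g : E →ₗ[ℝ] ℝ) v|) := by
    intro v
    obtain ⟨ε, hε, hball⟩ := Metric.isOpen_iff.mp isOpen_interior e he
    set t : ℝ := ε / (2 * (‖v‖ + 1)) with ht
    have hvpos : (0 : ℝ) < ‖v‖ + 1 := by positivity
    have htpos : 0 < t := by positivity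
    have hnorm : ‖t • v‖ < ε := by
      rw [norm_smul, Real.norm_eq_abs, abs_of_pos htpos, ht]
      calc ε / (2 * (‖v‖ + 1)) * ‖v‖ < ε / (2 * (‖v‖ + 1)) * (2 * (‖v‖ + 1)) := by
            apply mul_lt_mul_of_pos_left _ (by positivity)
            nlinarith [norm_nonneg v]
        _ = ε := by field_simp
    have hplus : e + t • v ∈ K := by
      have : e + t • v ∈ Metric.ball e ε := by
        rw [Metric.mem_ball, dist_eq_norm]
        simpa using hnorm
      exact interior_subset (hball this)
    have hminus : e - t • v ∈ K := by
      have : e - t • v ∈ Metric.ball e ε := by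
        rw [Metric.mem_ball, dist_eq_norm]
        simpa using hnorm
      exact interior_subset (hball this)
    refine ⟨1 / t, ?_⟩
    rintro r ⟨⟨g, hgpos, hge⟩, rfl⟩
    simp only
    have h1 : 0 ≤ g (e + t • v) := hgpos _ ((hmemK _).mpr hplus)
    have h2 : 0 ≤ g (e - t • v) := hgpos _ ((hmemK _).mpr hminus)
    rw [map_add, map_smul, hge, smul_eq_mul] at h1
    rw [map_sub, map_smul, hge, smul_eq_mul] at h2
    rw [abs_le]
    constructor
    · rw [neg_le, le_div_iff₀ htpos]
      nlinarith
    · rw [le_div_iff₀ htpos]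
      nlinarith
  by_cases hne : Nonempty (He e)
  · -- both suprema over a nonempty family
    unfold pnorm
    apply ciSup_le
    intro g
    obtain ⟨g, hgpos, hge⟩ := g
    simp only
    have hw : 0 ≤ g (d (f x) (f y)) := hgpos _ (hdnn _ _)
    rw [abs_of_nonneg hw]
    have hle : g (d (f x) (f y)) ≤ c * g (d x y) := by
      have hmem : c • d x y - d (f x) (f y) ∈ K := (hK _ _).mp (hcontr x y)
      have := hgpos _ ((hmemK _).mpr hmem)
      rw [map_sub, map_smul, smul_eq_mul] at this
      linarith
    refine hle.trans ?_
    apply mul_le_mul_of_nonneg_left _ hc0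
    have hxy : 0 ≤ g (d x y) := hgpos _ (hdnn _ _)
    calc g (d x y) = |g (d x y)| := (abs_of_nonneg hxy).symm
      _ ≤ ⨆ h : He e, |(h : E →ₗ[ℝ] ℝ) (d x y)| :=
        le_ciSup (hbdd (d x y)) (⟨g, hgpos, hge⟩ : He e)
  · -- empty family: both sides are 0
    have hempty : IsEmpty (He e) := not_nonempty_iff.mp hne
    unfold pnorm
    rw [iSup, iSup, Set.range_eq_empty, Set.range_eq_empty, Real.sSup_empty, mul_zero]
end
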